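/- With notation as in the supremizer construction, the reduced inf-sup constant satisfies β = inf_{q ≠ 0} ‖s_q‖ / ‖q‖, and if for every pressure basis element q the supremizer s_q belongs to the reduced velocity space V_r, then the inf-sup constant of b restricted to V_r × Q equals the inf-sup constant of b on V × Q. -/
import Mathlib


open RealInnerProductSpace

/-- The inf-sup constant equals `inf_{q≠0} ‖s_q‖/‖q‖`, and if every supremizer belongs to the
reduced velocity space `V_r`, the inf-sup constant of `b` restricted to `V_r × Q` equals the
inf-sup constant of `b` on `V × Q`. -/
theorem stmt8 {V Q : Type*} [NormedAddCommGroup V] [InnerProductSpace ℝ V]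
    [FiniteDimensional ℝ V] [Nontrivial V]
    [NormedAddCommGroup Q] [InnerProductSpace ℝ Q] [FiniteDimensional ℝ Q] [Nontrivial Q]
    (b : V →ₗ[ℝ] Q →ₗ[ℝ] ℝ) (s : Q → V) (hs : ∀ (q : Q) (v : V), ⟪s q, v⟫ = b v q)
    (Vr : Submodule ℝ V) :
    ((⨅ q : {q : Q // q ≠ 0}, ⨆ v : {v : V // v ≠ 0}, b v.1 q.1 / (‖v.1‖ * ‖q.1‖)) =
        ⨅ q : {q : Q // q ≠ 0}, ‖s q.1‖ / ‖q.1‖) ∧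
      ((∀ q : Q, s q ∈ Vr) →
        (⨅ q : {q : Q // q ≠ 0}, ⨆ v : {v : V // v ∈ Vr ∧ v ≠ 0}, b v.1 q.1 / (‖v.1‖ * ‖q.1‖)) =
          ⨅ q : {q : Q // q ≠ 0}, ⨆ v : {v : V // v ≠ 0}, b v.1 q.1 / (‖v.1‖ * ‖q.1‖)) := by
  have bound : ∀ q : Q, q ≠ 0 → ∀ v : V, v ≠ 0 →
      b v q / (‖v‖ * ‖q‖) ≤ ‖s q‖ / ‖q‖ := by
    intro q hq v hv
    have h1 : b v q ≤ ‖s q‖ * ‖v‖ := by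
      rw [← hs q v]; exact real_inner_le_norm _ _
    have hv' : (0:ℝ) < ‖v‖ := norm_pos_iff.mpr hv
    have hq' : (0:ℝ) < ‖q‖ := norm_pos_iff.mpr hq
    calc b v q / (‖v‖ * ‖q‖) ≤ ‖s q‖ * ‖v‖ / (‖v‖ * ‖q‖) := by
          apply div_le_div_of_nonneg_right h1 (by positivity) |>.trans_eq rfl
      _ = ‖s q‖ / ‖q‖ := by
          rw [mul_comm ‖v‖ ‖q‖, mul_div_mul_right _ _ (ne_of_gt hv')]
  -- value at the supremizer
  have atsup : ∀ q : Q, q ≠ 0 → s q ≠ 0 →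
      b (s q) q / (‖s q‖ * ‖q‖) = ‖s q‖ / ‖q‖ := by
    intro q hq hsq
    rw [← hs q (s q), real_inner_self_eq_norm_mul_norm]
    rw [mul_comm ‖s q‖ ‖q‖, mul_div_mul_right _ _ (norm_ne_zero_iff.mpr hsq)]
  have sup_eq : ∀ (P : V → Prop) (q : Q), q ≠ 0 → (s q ≠ 0 → P (s q)) →
      (⨆ v : {v : V // P v ∧ v ≠ 0}, b v.1 q / (‖v.1‖ * ‖q‖)) = ‖s q‖ / ‖q‖ := by
    intro P q hq hP
    by_cases hsq : s q = 0
    · by_cases hne : Nonempty {v : V // P v ∧ v ≠ 0}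
      · have : ∀ v : {v : V // P v ∧ v ≠ 0}, b v.1 q / (‖v.1‖ * ‖q‖) = 0 := by
          intro v
          have : b v.1 q = 0 := by rw [← hs q v.1, hsq, inner_zero_left]
          simp [this]
        simp [this, hsq]
      · rw [not_nonempty_iff] at hne
        rw [Real.iSup_of_isEmpty]
        simp [hsq]
    · have hne : Nonempty {v : V // P v ∧ v ≠ 0} := ⟨⟨s q, hP hsq, hsq⟩⟩
      apply le_antisymm
      · exact ciSup_le fun v => bound q hq v.1 v.2.2
      · have := le_ciSup (f := fun v : {v : V // P v ∧ v ≠ 0} => b v.1 q / (‖v.1‖ * ‖q‖))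
          ⟨‖s q‖ / ‖q‖, by rintro x ⟨v, rfl⟩; exact bound q hq v.1 v.2.2⟩
          ⟨s q, hP hsq, hsq⟩
        rw [atsup q hq hsq] at this
        exact this
  have full : ∀ q : Q, q ≠ 0 →
      (⨆ v : {v : V // v ≠ 0}, b v.1 q / (‖v.1‖ * ‖q‖)) = ‖s q‖ / ‖q‖ := by
    intro q hq
    have := sup_eq (fun _ => True) q hq (fun _ => trivial)
    rw [← this]
    exact (Equiv.subtypeEquivRight (fun v => by simp)).iSup_congr (fun v => rfl)
  constructor
  · exact iInf_congr fun q => full q.1 q.2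
  · intro hVr
    have h1 : (⨅ q : {q : Q // q ≠ 0}, ⨆ v : {v : V // v ∈ Vr ∧ v ≠ 0},
        b v.1 q.1 / (‖v.1‖ * ‖q.1‖)) = ⨅ q : {q : Q // q ≠ 0}, ‖s q.1‖ / ‖q.1‖ :=
      iInf_congr fun q => sup_eq (fun v => v ∈ Vr) q.1 q.2 (fun _ => hVr q.1)
    rw [h1]
    exact (iInf_congr fun q : {q : Q // q ≠ 0} => full q.1 q.2).symm
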